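/- arXiv:1404.1016 — 5 statements merged into one kernel-verified Lean document; each statement's English description precedes it below -/
import Mathlib

section
/- Let F be the attractor of an IFS of contracting similarities {S_i}_{i∈I} on ℝ^d with ratios c_i ∈ (0,1), let s = dim_H F be the Hausdorff dimension of F, and suppose H^s(F) > 0. Let c_min = min_{i∈I} c_i and let |F| denote the diameter of F (assumed positive). Then for every x ∈ F and every 0 < r < min{1, |F|}, H^s(B(x,r) ∩ F) ≥ (c_min^s · H^s(F) / |F|^s) · r^s. -/
open Set Metric Filter Function MeasureTheory

/-- The Assouad dimension of a subset of a metric space: the infimum of all `s ≥ 0`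
for which there is a constant `K > 0` such that for all `0 < ρ < r ≤ 1`, every ball
of radius `r` centred in the set can be covered by at most `K (r/ρ)^s` open balls of
radius `ρ`. -/
noncomputable def assouadDim {X : Type*} [MetricSpace X] (A : Set X) : ℝ :=
  sInf {s : ℝ | 0 ≤ s ∧ ∃ K : ℝ, 0 < K ∧ ∀ r ρ : ℝ, 0 < ρ → ρ < r → r ≤ 1 →
    ∀ x ∈ A, ∃ t : Finset X, (A ∩ Metric.ball x r ⊆ ⋃ y ∈ t, Metric.ball y ρ) ∧
      (t.card : ℝ) ≤ K * (r / ρ) ^ s}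

/-- The composition `S_{i₁} ∘ ⋯ ∘ S_{i_k}` associated to a finite word. -/
def wordMap {ι X : Type*} (S : ι → X → X) : List ι → X → X
  | [] => id
  | i :: w => S i ∘ wordMap S w

/-- The weak separation property: the identity is not in the closure (for the topology of
pointwise convergence) of the set of maps `S_α⁻¹ ∘ S_β` for distinct nonempty words
`α ≠ β`, with the identity itself removed. -/
def SatisfiesWSP {ι X : Type*} [Nonempty X] [TopologicalSpace X] (S : ι → X → X) : Prop :=
  id ∉ closure ({g : X → X | ∃ w₁ w₂ : List ι, w₁ ≠ [] ∧ w₂ ≠ [] ∧ w₁ ≠ w₂ ∧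
      g = Function.invFun (wordMap S w₁) ∘ wordMap S w₂} \ {id})

/-!
Descend through the IFS from `x`: while the current piece `S_{i₁} ∘ ⋯ ∘ S_{i_k}(F)` containing `x`
is at least as large as `r`, pass to the sub-piece containing `x`. The first piece of diameter
`< r` lies in `B(x, r)` and, since one step shrinks diameters by a factor of at least `c_min`, has
diameter `≥ c_min r`; it is a similar copy of `F`, so its `H^s` measure is
`(c_min r / |F|)^s H^s(F)` at least.
-/

theorem hausdorffMeasure_image_of_dist_eq_mul {X Y : Type*} [MetricSpace X] [MeasurableSpace X]
    [BorelSpace X] [MetricSpace Y] [MeasurableSpace Y] [BorelSpace Y] {f : X → Y} {ρ : ℝ}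
    (hρ : 0 < ρ) (hf : ∀ a b, dist (f a) (f b) = ρ * dist a b) {s : ℝ} (hs : 0 ≤ s)
    (E : Set X) : μH[s] (f '' E) = ENNReal.ofReal ρ ^ s * μH[s] E := by
  have hlip : LipschitzWith (Real.toNNReal ρ) f :=
    .of_dist_le_mul fun a b => by rw [hf, Real.coe_toNNReal _ hρ.le]
  have hantilip : AntilipschitzWith (Real.toNNReal ρ⁻¹) f :=
    .of_le_mul_dist fun a b => by
      rw [hf, Real.coe_toNNReal _ (inv_nonneg.2 hρ.le), inv_mul_cancel_left₀ hρ.ne']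
  refine le_antisymm (hlip.hausdorffMeasure_image_le hs E) ?_
  calc ENNReal.ofReal ρ ^ s * μH[s] E
      ≤ ENNReal.ofReal ρ ^ s * (ENNReal.ofReal ρ⁻¹ ^ s * μH[s] (f '' E)) := by
        gcongr; exact hantilip.le_hausdorffMeasure_image hs E
    _ = μH[s] (f '' E) := by
        rw [← mul_assoc, ← ENNReal.mul_rpow_of_nonneg _ _ hs, ← ENNReal.ofReal_mul hρ.le,
          mul_inv_cancel₀ hρ.ne', ENNReal.ofReal_one, ENNReal.one_rpow, one_mul]

section SelfSimilar

variable {X ι : Type*} [MetricSpace X] {S : ι → X → X} {c : ι → ℝ} {F : Set X}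

theorem exists_similar_copy_of_pow_mul_diam_lt (hc : ∀ i, 0 < c i)
    (hsim : ∀ i x y, dist (S i x) (S i y) = c i * dist x y) (hFattr : F = ⋃ i, S i '' F)
    {q m : ℝ} (hq : ∀ i, c i ≤ q) (hm : ∀ i, m ≤ c i) (n : ℕ) {x : X} (hx : x ∈ F) {r : ℝ}
    (hr : q ^ n * diam F < r) (hrF : r ≤ diam F) :
    ∃ ρ > 0, ∃ f : X → X, (∀ a b, dist (f a) (f b) = ρ * dist a b) ∧ f '' F ⊆ F ∧
      x ∈ f '' F ∧ m * r ≤ ρ * diam F ∧ ρ * diam F < r := by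
  induction n generalizing x r with
  | zero => rw [pow_zero, one_mul] at hr; linarith
  | succ n ih =>
    obtain ⟨i, y, hy, rfl⟩ : ∃ i, ∃ y ∈ F, S i y = x := by
      rw [hFattr] at hx; simpa only [mem_iUnion, mem_image] using hx
    have hci := hc i
    have hq0 : 0 ≤ q := hci.le.trans (hq i)
    have hSF : S i '' F ⊆ F := (subset_iUnion (fun j => S j '' F) i).trans hFattr.symm.subset
    have hr0 : 0 < r := lt_of_le_of_lt (by positivity) hr
    by_cases hbig : diam F < r / c i
    · refine ⟨c i, hci, S i, hsim i, hSF, mem_image_of_mem _ hy, ?_, ?_⟩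
      · nlinarith [hm i]
      · rwa [lt_div_iff₀ hci, mul_comm] at hbig
    · have hr' : q ^ n * diam F < r / c i := by
        rw [lt_div_iff₀ hci]
        calc q ^ n * diam F * c i ≤ q ^ n * diam F * q := by gcongr; exact hq i
          _ = q ^ (n + 1) * diam F := by ring
          _ < r := hr
      obtain ⟨ρ, hρ, g, hg, hgF, hyg, hlow, hup⟩ := ih hy hr' (not_lt.1 hbig)
      refine ⟨c i * ρ, by positivity, S i ∘ g, fun a b => by simp only [comp_apply, hsim, hg,
        mul_assoc], ?_, ?_, ?_, ?_⟩
      · rw [image_comp]; exact (image_mono hgF).trans hSF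
      · rw [image_comp]; exact mem_image_of_mem _ hyg
      · rw [mul_div_assoc', div_le_iff₀ hci] at hlow; linarith
      · rw [lt_div_iff₀ hci] at hup; linarith

theorem exists_similar_copy_subset_ball [Finite ι] (hc : ∀ i, c i ∈ Ioo (0 : ℝ) 1)
    (hsim : ∀ i x y, dist (S i x) (S i y) = c i * dist x y) (hFattr : F = ⋃ i, S i '' F)
    {m : ℝ} (hm : ∀ i, m ≤ c i) {x : X} (hx : x ∈ F) {r : ℝ} (hr : 0 < r)
    (hrF : r ≤ diam F) :
    ∃ ρ > 0, ∃ f : X → X, (∀ a b, dist (f a) (f b) = ρ * dist a b) ∧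
      f '' F ⊆ ball x r ∩ F ∧ m * r ≤ ρ * diam F := by
  have hFdiam : 0 < diam F := hr.trans_le hrF
  have hFbdd : Bornology.IsBounded F := by
    by_contra h; rw [diam_eq_zero_of_unbounded h] at hFdiam; exact hFdiam.false
  have : Nonempty ι := by
    rw [hFattr] at hx; obtain ⟨i, -⟩ := mem_iUnion.1 hx; exact ⟨i⟩
  obtain ⟨j, hj⟩ := Finite.exists_max c
  obtain ⟨n, hn⟩ := exists_pow_lt_of_lt_one (div_pos hr hFdiam) (hc j).2
  rw [lt_div_iff₀ hFdiam] at hn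
  obtain ⟨ρ, hρ, f, hf, hfF, ⟨y, hy, rfl⟩, hlow, hup⟩ :=
    exists_similar_copy_of_pow_mul_diam_lt (fun i => (hc i).1) hsim hFattr hj hm n hx hn hrF
  refine ⟨ρ, hρ, f, hf, subset_inter ?_ hfF, hlow⟩
  rintro _ ⟨a, ha, rfl⟩
  rw [mem_ball, hf]
  calc ρ * dist a y ≤ ρ * diam F := by gcongr; exact dist_le_diam_of_mem hFbdd ha hy
    _ < r := hup

end SelfSimilar

theorem hausdorff_measure_ball_lower_bound_general {d : ℕ} {ι : Type} [Fintype ι]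
    (S : ι → EuclideanSpace ℝ (Fin d) → EuclideanSpace ℝ (Fin d)) (c : ι → ℝ)
    (hc : ∀ i, c i ∈ Set.Ioo (0 : ℝ) 1)
    (hsim : ∀ i x y, dist (S i x) (S i y) = c i * dist x y)
    (F : Set (EuclideanSpace ℝ (Fin d)))
    (hFattr : F = ⋃ i, S i '' F)
    (s : ℝ) (hs : s = (dimH F).toReal)
    (cmin : ℝ) (hcmin : IsLeast (Set.range c) cmin)
    (hdiam : 0 < Metric.diam F) :
    ∀ x ∈ F, ∀ r : ℝ, 0 < r → r < min 1 (Metric.diam F) →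
      ENNReal.ofReal (cmin ^ s / Metric.diam F ^ s * r ^ s) * μH[s] F ≤
        μH[s] (Metric.ball x r ∩ F) := by
  intro x hx r hr hrlt
  have hs0 : 0 ≤ s := hs ▸ ENNReal.toReal_nonneg
  have hcmin_pos : 0 < cmin := by obtain ⟨i, rfl⟩ := hcmin.1; exact (hc i).1
  obtain ⟨ρ, hρ, f, hf, hfball, hlow⟩ := exists_similar_copy_subset_ball hc hsim hFattr
    (fun i => hcmin.2 ⟨i, rfl⟩) hx hr (hrlt.trans_le (min_le_right _ _)).le
  have hcoef : cmin ^ s / diam F ^ s * r ^ s ≤ ρ ^ s := by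
    rw [div_mul_eq_mul_div, ← Real.mul_rpow hcmin_pos.le hr.le, ← Real.div_rpow (by positivity)
      hdiam.le]
    exact Real.rpow_le_rpow (by positivity) ((div_le_iff₀ hdiam).2 hlow) hs0
  calc ENNReal.ofReal (cmin ^ s / diam F ^ s * r ^ s) * μH[s] F
      ≤ ENNReal.ofReal ρ ^ s * μH[s] F := by
        rw [ENNReal.ofReal_rpow_of_pos hρ]; gcongr
    _ = μH[s] (f '' F) := (hausdorffMeasure_image_of_dist_eq_mul hρ hf hs0 F).symm
    _ ≤ μH[s] (ball x r ∩ F) := measure_mono hfball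

/-- **Lower Ahlfors regularity bound for self-similar sets.**  Let `F` be the attractor
of an IFS of contracting similarities on `ℝ^d` with ratios `c i ∈ (0,1)`, let
`s = dim_H F`, and suppose `H^s(F) > 0`.  With `cmin` the least ratio and `|F| = diam F`
(assumed positive), for every `x ∈ F` and `0 < r < min 1 (diam F)` we have
`H^s(B(x,r) ∩ F) ≥ (cmin^s · H^s(F) / |F|^s) · r^s`. -/
theorem hausdorff_measure_ball_lower_bound {d : ℕ} {ι : Type} [Fintype ι] [Nonempty ι]
    (S : ι → EuclideanSpace ℝ (Fin d) → EuclideanSpace ℝ (Fin d)) (c : ι → ℝ)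
    (hc : ∀ i, c i ∈ Set.Ioo (0 : ℝ) 1)
    (hsim : ∀ i x y, dist (S i x) (S i y) = c i * dist x y)
    (F : Set (EuclideanSpace ℝ (Fin d))) (hFcomp : IsCompact F) (hFne : F.Nonempty)
    (hFattr : F = ⋃ i, S i '' F)
    (s : ℝ) (hs : s = (dimH F).toReal)
    (hpos : 0 < μH[s] F)
    (cmin : ℝ) (hcmin : IsLeast (Set.range c) cmin)
    (hdiam : 0 < Metric.diam F) :
    ∀ x ∈ F, ∀ r : ℝ, 0 < r → r < min 1 (Metric.diam F) →
      ENNReal.ofReal (cmin ^ s / Metric.diam F ^ s * r ^ s) * μH[s] F ≤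
        μH[s] (Metric.ball x r ∩ F) :=
  hausdorff_measure_ball_lower_bound_general S c hc hsim F hFattr s hs cmin hcmin hdiam
end

section
/- Let {S_i}_{i∈I} be an IFS of contracting similarities on ℝ with attractor F ⊆ [0,1]. Suppose there exist finite words α_k, β_k ∈ I* such that ‖S_{α_k}^{-1}∘S_{β_k} − I‖_∞ → 0 as k → ∞, where ‖·‖_∞ denotes the supremum norm over [0,1]. Then there exist finite words α'_k, β'_k ∈ I* such that ‖S_{α'_k}^{-1}∘S_{β'_k} − I‖_∞ → 0 as k → ∞ and such that each S_{α'_k} is orientation-preserving, i.e. has positive derivative S'_{α'_k} = c_{α'_k} > 0. -/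
/-! Prefixing both words with `α` turns `S_α⁻¹ ∘ S_β` into `S_{αα}⁻¹ ∘ S_{αβ}` without changing
it, and `S_{αα} = S_α ∘ S_α` is increasing: `S_α` is continuous and injective, hence strictly
monotone or strictly antitone, and either way its square is strictly monotone. -/

open Set Metric Filter Function

section wordMap

variable {ι X : Type*} (S : ι → X → X)

lemma wordMap_append (u v : List ι) : wordMap S (u ++ v) = wordMap S u ∘ wordMap S v := by
  induction u with
  | nil => rfl
  | cons i u ih => simp [wordMap, ih, Function.comp_assoc]

variable {S}

lemma wordMap_injective (hS : ∀ i, Injective (S i)) (w : List ι) : Injective (wordMap S w) := by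
  induction w with
  | nil => exact injective_id
  | cons i w ih => exact (hS i).comp ih

lemma wordMap_continuous [TopologicalSpace X] (hS : ∀ i, Continuous (S i)) (w : List ι) :
    Continuous (wordMap S w) := by
  induction w with
  | nil => exact continuous_id
  | cons i w ih => exact (hS i).comp ih

end wordMap

lemma continuous_of_dist_eq_mul {X Y : Type*} [PseudoMetricSpace X] [PseudoMetricSpace Y]
    {f : X → Y} {c : ℝ} (hc : 0 ≤ c) (h : ∀ x y, dist (f x) (f y) = c * dist x y) :
    Continuous f :=
  (LipschitzWith.of_dist_le_mul (K := ⟨c, hc⟩) fun x y => (h x y).le).continuous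

lemma injective_of_dist_eq_mul {X Y : Type*} [MetricSpace X] [MetricSpace Y]
    {f : X → Y} {c : ℝ} (hc : c ≠ 0) (h : ∀ x y, dist (f x) (f y) = c * dist x y) :
    Injective f := fun x y hxy => by
  simpa [hxy, hc] using h x y

/-- Holds also off the range of `g`, where both sides are the junk value of `invFun`. -/
lemma Function.Injective.invFun_comp_apply {α β γ : Type*} [Nonempty α] {f : β → γ}
    (hf : Injective f) (g : α → β) (z : β) : invFun (f ∘ g) (f z) = invFun g z := by
  unfold invFun
  congr! 3 <;> exact hf.eq_iff

lemma Continuous.strictMono_comp_self_of_injective {α : Type*} [ConditionallyCompleteLinearOrder α]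
    [TopologicalSpace α] [OrderTopology α] [DenselyOrdered α] {f : α → α}
    (hf_c : Continuous f) (hf_i : Injective f) : StrictMono (f ∘ f) := by
  rcases hf_c.strictMono_of_inj hf_i with hmono | hanti
  · exact hmono.comp hmono
  · exact hanti.comp hanti

theorem remove_reflections_general {ι : Type}
    (S : ι → ℝ → ℝ) (c : ι → ℝ)
    (hc : ∀ i, c i ∈ Set.Ioo (0 : ℝ) 1)
    (hsim : ∀ i x y, dist (S i x) (S i y) = c i * dist x y)
    (A B : ℕ → List ι) (hA : ∀ k, A k ≠ [])
    (hconv : Tendsto (fun k => ⨆ x : Set.Icc (0 : ℝ) 1,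
        |Function.invFun (wordMap S (A k)) (wordMap S (B k) (x : ℝ)) - (x : ℝ)|)
      atTop (nhds 0)) :
    ∃ A' B' : ℕ → List ι, (∀ k, A' k ≠ []) ∧ (∀ k, B' k ≠ []) ∧
      (∀ k, StrictMono (wordMap S (A' k))) ∧
      Tendsto (fun k => ⨆ x : Set.Icc (0 : ℝ) 1,
          |Function.invFun (wordMap S (A' k)) (wordMap S (B' k) (x : ℝ)) - (x : ℝ)|)
        atTop (nhds 0) := by
  have hinj : ∀ w, Injective (wordMap S w) :=
    wordMap_injective fun i => injective_of_dist_eq_mul (hc i).1.ne' (hsim i)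
  have hcont : ∀ w, Continuous (wordMap S w) :=
    wordMap_continuous fun i => continuous_of_dist_eq_mul (hc i).1.le (hsim i)
  refine ⟨fun k => A k ++ A k, fun k => A k ++ B k, fun k => by simp [hA k],
    fun k => by simp [hA k], fun k => ?_, ?_⟩
  · rw [wordMap_append]
    exact (hcont _).strictMono_comp_self_of_injective (hinj _)
  · simpa only [wordMap_append, comp_apply, (hinj _).invFun_comp_apply] using hconv

/-- **Removing reflections.**  Let `{S i}` be an IFS of contracting similarities on `ℝ`
with attractor `F ⊆ [0,1]`.  If there are nonempty words `α k, β k` with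
`‖S_{α k}⁻¹ ∘ S_{β k} - I‖_∞ → 0` (supremum over `[0,1]`), then there are nonempty
words `α' k, β' k` with `‖S_{α' k}⁻¹ ∘ S_{β' k} - I‖_∞ → 0` such that every
`S_{α' k}` is orientation-preserving (strictly increasing, i.e. positive derivative). -/
theorem remove_reflections {ι : Type} [Fintype ι] [Nonempty ι]
    (S : ι → ℝ → ℝ) (c : ι → ℝ)
    (hc : ∀ i, c i ∈ Set.Ioo (0 : ℝ) 1)
    (hsim : ∀ i x y, dist (S i x) (S i y) = c i * dist x y)
    (F : Set ℝ) (hFcomp : IsCompact F) (hFne : F.Nonempty)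
    (hFattr : F = ⋃ i, S i '' F) (hFsub : F ⊆ Set.Icc (0 : ℝ) 1)
    (A B : ℕ → List ι) (hA : ∀ k, A k ≠ []) (hB : ∀ k, B k ≠ [])
    (hconv : Tendsto (fun k => ⨆ x : Set.Icc (0 : ℝ) 1,
        |Function.invFun (wordMap S (A k)) (wordMap S (B k) (x : ℝ)) - (x : ℝ)|)
      atTop (nhds 0)) :
    ∃ A' B' : ℕ → List ι, (∀ k, A' k ≠ []) ∧ (∀ k, B' k ≠ []) ∧
      (∀ k, StrictMono (wordMap S (A' k))) ∧
      Tendsto (fun k => ⨆ x : Set.Icc (0 : ℝ) 1,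
          |Function.invFun (wordMap S (A' k)) (wordMap S (B' k) (x : ℝ)) - (x : ℝ)|)
        atTop (nhds 0) :=
  remove_reflections_general S c hc hsim A B hA hconv
end

section
/- Let F be a self-similar set in ℝ^d, attractor of an IFS of contracting similarities {S_i}_{i∈I}, not contained in any (d−1)-dimensional hyperplane. Let (Φ_k) be a sequence of affine maps on ℝ^d such that 0 < ‖Φ_k‖_∞ → 0 as k → ∞, where ‖·‖_∞ is the supremum norm over [0,1]^d. Then there exist ρ > 0, a finite word γ ∈ I*, a point a ∈ ℝ^d with S_γ(a) = a, and a subsequence (k_j) such that for every j: sup{‖Φ_{k_j}(x)‖ : x ∈ B(a,ρ)} ≤ 3 · inf{‖Φ_{k_j}(x)‖ : x ∈ B(a,ρ)} and ρ‖DΦ_{k_j}‖ ≤ ‖Φ_{k_j}(a)‖, where DΦ_k denotes the (constant) linear part of Φ_k and ‖DΦ_k‖ its operator norm. -/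
/-!
Normalise `(A k, bv k)` to the unit sphere of the finite-dimensional space of affine maps and
extract a subsequence converging to some affine `Ψ ≠ 0`. Since `F` spans `ℝ^d` affinely, `Ψ` is
nonzero at some `p ∈ F`, hence near `p`; fixed points of the word maps `S_γ` are dense in `F`, so
`Ψ a ≠ 0` for such a fixed point `a`. For `ρ` with `2ρ‖DΨ‖ < ‖Ψ a‖`, the scale-invariant
inequality `2ρ‖DΦ_k‖ ≤ ‖Φ_k a‖` holds along the tail of the subsequence, and it keeps `‖Φ_k‖`
between `‖Φ_k a‖ / 2` and `3 ‖Φ_k a‖ / 2` on `B(a, ρ)`.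
-/

open Set Metric Filter Function

open scoped NNReal Topology

section WordMap

variable {ι X : Type*}

theorem lipschitzWith_wordMap [PseudoEMetricSpace X] {S : ι → X → X} {K : ℝ≥0}
    (hS : ∀ i, LipschitzWith K (S i)) (w : List ι) :
    LipschitzWith (K ^ w.length) (wordMap S w) := by
  induction w with
  | nil => simpa [wordMap] using LipschitzWith.id
  | cons i w ih => simpa [wordMap, pow_succ'] using (hS i).comp ih

theorem exists_lipschitzWith_lt_one [Fintype ι] [PseudoMetricSpace X] {S : ι → X → X}
    {c : ι → ℝ} (hc : ∀ i, c i < 1) (hsim : ∀ i x y, dist (S i x) (S i y) = c i * dist x y) :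
    ∃ K : ℝ≥0, K < 1 ∧ ∀ i, LipschitzWith K (S i) := by
  refine ⟨Finset.univ.sup fun i => (c i).toNNReal,
    (Finset.sup_lt_iff zero_lt_one).2 fun i _ => Real.toNNReal_lt_one.2 (hc i),
    fun i => LipschitzWith.of_dist_le_mul fun x y => ?_⟩
  rw [hsim]
  gcongr
  exact (Real.le_coe_toNNReal (c i)).trans
    (NNReal.coe_le_coe.2 (Finset.le_sup (f := fun i => (c i).toNNReal) (Finset.mem_univ i)))

theorem exists_mem_image_wordMap {S : ι → X → X} {F : Set X} (hF : F ⊆ ⋃ i, S i '' F)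
    (n : ℕ) {p : X} (hp : p ∈ F) : ∃ w : List ι, w.length = n ∧ p ∈ wordMap S w '' F := by
  induction n generalizing p with
  | zero => exact ⟨[], rfl, p, hp, rfl⟩
  | succ n ih =>
    obtain ⟨i, q, hq, rfl⟩ := mem_iUnion.1 (hF hp)
    obtain ⟨w, hw, y, hy, rfl⟩ := ih hq
    exact ⟨i :: w, by simp [hw], y, hy, rfl⟩

theorem exists_fixedPoint_wordMap_near [MetricSpace X] [CompleteSpace X] {S : ι → X → X}
    {K : ℝ≥0} (hK : K < 1) (hS : ∀ i, LipschitzWith K (S i)) {F : Set X}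
    (hFb : Bornology.IsBounded F) (hF : F ⊆ ⋃ i, S i '' F) {p : X} (hp : p ∈ F)
    {ε : ℝ} (hε : 0 < ε) : ∃ γ : List ι, γ ≠ [] ∧ ∃ a, wordMap S γ a = a ∧ dist a p < ε := by
  -- `p = S_w q` with `S_w` a `K ^ |w|`-contraction, so `p` is close to the fixed point of `S_w`
  obtain ⟨D, hD⟩ := isBounded_iff.1 hFb
  have hpow : Tendsto (fun n => (K : ℝ) ^ n) atTop (𝓝 0) :=
    tendsto_pow_atTop_nhds_zero_of_lt_one K.2 hK
  obtain ⟨n, hn, hhalf, hsmall⟩ : ∃ n, 1 ≤ n ∧ (K : ℝ) ^ n ≤ 1 / 2 ∧ 2 * (K : ℝ) ^ n * D < ε :=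
    ((eventually_ge_atTop 1).and ((hpow.eventually_le_const (by norm_num)).and
      (((hpow.const_mul 2).mul_const D).eventually_lt_const (by simpa using hε)))).exists
  obtain ⟨w, rfl, q, hq, rfl⟩ := exists_mem_image_wordMap hF n hp
  have : Nonempty X := ⟨q⟩
  have hcontr : ContractingWith (K ^ w.length) (wordMap S w) :=
    ⟨pow_lt_one₀ K.2 hK (by omega), lipschitzWith_wordMap hS w⟩
  refine ⟨w, List.ne_nil_of_length_pos hn, _, hcontr.fixedPoint_isFixedPt, ?_⟩
  rw [dist_comm]
  calc dist (wordMap S w q) (ContractingWith.fixedPoint _ hcontr)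
      ≤ dist (wordMap S w q) (wordMap S w (wordMap S w q)) / (1 - (K : ℝ) ^ w.length) := by
        simpa using hcontr.dist_fixedPoint_le (wordMap S w q)
    _ ≤ (K : ℝ) ^ w.length * D / (1 / 2) := by
        have hD0 : 0 ≤ D := dist_nonneg.trans (hD hq hq)
        gcongr
        · exact ((lipschitzWith_wordMap hS w).dist_le_mul _ _).trans
            (by simpa using mul_le_mul_of_nonneg_left (hD hq hp) (by positivity))
        · linarith
    _ < ε := by linarith

end WordMap

section AffineMap

variable {E E' : Type*} [NormedAddCommGroup E] [NormedSpace ℝ E]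
  [NormedAddCommGroup E'] [NormedSpace ℝ E']

theorem exists_mem_apply_add_ne_zero {F : Set E} (hF : affineSpan ℝ F = ⊤)
    {L : E →L[ℝ] E'} {b : E'} (h : (L, b) ≠ 0) : ∃ x ∈ F, L x + b ≠ 0 := by
  by_contra! h0
  have hf : (L : E →ₗ[ℝ] E').toAffineMap + AffineMap.const ℝ E b = AffineMap.const ℝ E 0 :=
    AffineMap.ext_on hF fun x hx => by simpa using h0 x hx
  have hL : L = 0 := by
    ext x
    simpa using congrArg (fun f : E →ᵃ[ℝ] E' => f.linear x) hf
  have hb : b = 0 := by simpa using congrArg (fun f : E →ᵃ[ℝ] E' => f 0) hf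
  exact h (by simp [hL, hb])

theorem iSup_norm_le_three_mul_iInf (L : E →L[ℝ] E') (b : E') {a : E} {ρ : ℝ} (hρ : 0 < ρ)
    (h : 2 * ρ * ‖L‖ ≤ ‖L a + b‖) :
    (⨆ x : ball a ρ, ‖L x + b‖) ≤ 3 * ⨅ x : ball a ρ, ‖L x + b‖ := by
  have hclose : ∀ x ∈ ball a ρ, |‖L x + b‖ - ‖L a + b‖| ≤ ‖L a + b‖ / 2 := fun x hx =>
    calc |‖L x + b‖ - ‖L a + b‖| ≤ ‖L x + b - (L a + b)‖ := abs_norm_sub_norm_le _ _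
      _ = ‖L (x - a)‖ := by rw [map_sub, add_sub_add_right_eq_sub]
      _ ≤ ‖L‖ * ρ := (L.le_opNorm _).trans (by gcongr; exact (mem_ball_iff_norm.1 hx).le)
      _ ≤ ‖L a + b‖ / 2 := by linarith
  have : Nonempty (ball a ρ) := ⟨⟨a, mem_ball_self hρ⟩⟩
  refine ciSup_le fun x => ?_
  calc ‖L x + b‖ ≤ 3 * (‖L a + b‖ / 2) := by linarith [(abs_le.1 (hclose x x.2)).2]
    _ ≤ 3 * ⨅ x : ball a ρ, ‖L x + b‖ := by
      gcongr
      exact le_ciInf fun y => by linarith [(abs_le.1 (hclose y y.2)).1]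

-- `‖L a + b‖ - 2ρ‖L‖` is positively homogeneous in `(L, b)`
theorem eventually_two_mul_norm_le {v : ℕ → (E →L[ℝ] E') × E'} (hv : ∀ k, v k ≠ 0)
    {P : (E →L[ℝ] E') × E'} (hlim : Tendsto (fun k => ‖v k‖⁻¹ • v k) atTop (𝓝 P)) {a : E}
    {ρ : ℝ} (h : 2 * ρ * ‖P.1‖ < ‖P.1 a + P.2‖) :
    ∀ᶠ k in atTop, 2 * ρ * ‖(v k).1‖ ≤ ‖(v k).1 a + (v k).2‖ := by
  have hg : Continuous fun q : (E →L[ℝ] E') × E' => ‖q.1 a + q.2‖ - 2 * ρ * ‖q.1‖ := by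
    fun_prop
  filter_upwards [((hg.tendsto P).comp hlim).eventually_const_lt (sub_pos.2 h)] with k hk
  have hm : 0 < ‖v k‖⁻¹ := inv_pos.2 (norm_pos_iff.2 (hv k))
  simp only [comp_apply, Prod.smul_fst, Prod.smul_snd, smul_apply, ← smul_add, norm_smul,
    norm_inv, norm_norm] at hk
  rw [mul_left_comm, ← mul_sub] at hk
  exact (sub_pos.1 (pos_of_mul_pos_right hk hm.le)).le

end AffineMap

theorem exists_subseq_tendsto_inv_norm_smul {V : Type*} [NormedAddCommGroup V]
    [NormedSpace ℝ V] [ProperSpace V] {v : ℕ → V} (hv : ∀ k, v k ≠ 0) :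
    ∃ P ≠ 0, ∃ φ : ℕ → ℕ, StrictMono φ ∧
      Tendsto (fun j => ‖v (φ j)‖⁻¹ • v (φ j)) atTop (𝓝 P) := by
  obtain ⟨P, hP, φ, hφ, hlim⟩ := (isCompact_sphere (0 : V) 1).tendsto_subseq
    (x := fun k => ‖v k‖⁻¹ • v k) fun k => by simp [norm_smul, hv k]
  exact ⟨P, ne_zero_of_mem_unit_sphere ⟨P, hP⟩, φ, hφ, hlim⟩

theorem affine_localisation_lemma_general {d : ℕ} {ι : Type} [Fintype ι]
    (S : ι → EuclideanSpace ℝ (Fin d) → EuclideanSpace ℝ (Fin d)) (c : ι → ℝ)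
    (hc : ∀ i, c i ∈ Set.Ioo (0 : ℝ) 1)
    (hsim : ∀ i x y, dist (S i x) (S i y) = c i * dist x y)
    (F : Set (EuclideanSpace ℝ (Fin d))) (hFcomp : IsCompact F)
    (hFattr : F = ⋃ i, S i '' F)
    (hFspan : affineSpan ℝ F = ⊤)
    (A : ℕ → EuclideanSpace ℝ (Fin d) →L[ℝ] EuclideanSpace ℝ (Fin d))
    (bv : ℕ → EuclideanSpace ℝ (Fin d))
    (hnz : ∀ k, ∃ x : EuclideanSpace ℝ (Fin d),
      (∀ i, x i ∈ Set.Icc (0 : ℝ) 1) ∧ A k x + bv k ≠ 0) :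
    ∃ ρ : ℝ, 0 < ρ ∧ ∃ γ : List ι, γ ≠ [] ∧ ∃ a : EuclideanSpace ℝ (Fin d),
      wordMap S γ a = a ∧ ∃ φ : ℕ → ℕ, StrictMono φ ∧ ∀ j : ℕ,
        ((⨆ x : Metric.ball a ρ, ‖A (φ j) (x : EuclideanSpace ℝ (Fin d)) + bv (φ j)‖) ≤
          3 * ⨅ x : Metric.ball a ρ, ‖A (φ j) (x : EuclideanSpace ℝ (Fin d)) + bv (φ j)‖) ∧
        ρ * ‖A (φ j)‖ ≤ ‖A (φ j) a + bv (φ j)‖ := by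
  have hv : ∀ k, (A k, bv k) ≠ 0 := fun k h => by
    obtain ⟨x, -, hx⟩ := hnz k
    obtain ⟨hA, hb⟩ := Prod.mk_eq_zero.1 h
    exact hx (by simp [hA, hb])
  obtain ⟨P, hP, φ, hφ, hlim⟩ := exists_subseq_tendsto_inv_norm_smul hv
  obtain ⟨p, hpF, hpP⟩ := exists_mem_apply_add_ne_zero hFspan hP
  obtain ⟨ε, hε, hεP⟩ :=
    isOpen_iff.1 (isOpen_ne_fun (f := fun y => P.1 y + P.2) (by fun_prop) continuous_const) p hpP
  obtain ⟨K, hK, hS⟩ := exists_lipschitzWith_lt_one (fun i => (hc i).2) hsim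
  obtain ⟨γ, hγ, a, ha, hap⟩ :=
    exists_fixedPoint_wordMap_near hK hS hFcomp.isBounded hFattr.subset hpF hε
  set t := ‖P.1 a + P.2‖
  have ht : 0 < t := norm_pos_iff.2 (hεP hap)
  set ρ := t / (2 * (‖P.1‖ + 1))
  have hρ : 0 < ρ := by positivity
  have hgap : 2 * ρ * ‖P.1‖ < t := by
    have : 2 * ρ * (‖P.1‖ + 1) = t := by simp only [ρ]; field_simp
    linarith
  obtain ⟨N, hN⟩ := eventually_atTop.1 <|
    eventually_two_mul_norm_le (v := fun j => (A (φ j), bv (φ j))) (fun j => hv (φ j)) hlim hgap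
  refine ⟨ρ, hρ, γ, hγ, a, ha, fun j => φ (j + N), fun _ _ h => hφ (by omega),
    fun j => ⟨iSup_norm_le_three_mul_iInf _ _ hρ (hN _ le_add_self), ?_⟩⟩
  linarith [hN (j + N) le_add_self, mul_nonneg hρ.le (norm_nonneg (A (φ (j + N))))]

/-- **Localisation lemma.**  Let `F` be a self-similar set in `ℝ^d`, attractor of an IFS
of contracting similarities, not contained in any `(d-1)`-dimensional hyperplane.  Let
`Φ k x = A k x + bv k` be affine maps with `0 < ‖Φ k‖_∞ → 0` (supremum over `[0,1]^d`).
Then there are `ρ > 0`, a nonempty word `γ`, a point `a` with `S_γ(a) = a`, and a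
subsequence `k ∘ φ` along which
`sup_{x ∈ B(a,ρ)} ‖Φ x‖ ≤ 3 inf_{x ∈ B(a,ρ)} ‖Φ x‖` and `ρ ‖DΦ‖ ≤ ‖Φ(a)‖`. -/
theorem affine_localisation_lemma {d : ℕ} {ι : Type} [Fintype ι] [Nonempty ι]
    (S : ι → EuclideanSpace ℝ (Fin d) → EuclideanSpace ℝ (Fin d)) (c : ι → ℝ)
    (hc : ∀ i, c i ∈ Set.Ioo (0 : ℝ) 1)
    (hsim : ∀ i x y, dist (S i x) (S i y) = c i * dist x y)
    (F : Set (EuclideanSpace ℝ (Fin d))) (hFcomp : IsCompact F) (hFne : F.Nonempty)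
    (hFattr : F = ⋃ i, S i '' F)
    (hFspan : affineSpan ℝ F = ⊤)
    (A : ℕ → EuclideanSpace ℝ (Fin d) →L[ℝ] EuclideanSpace ℝ (Fin d))
    (bv : ℕ → EuclideanSpace ℝ (Fin d))
    (hnz : ∀ k, ∃ x : EuclideanSpace ℝ (Fin d),
      (∀ i, x i ∈ Set.Icc (0 : ℝ) 1) ∧ A k x + bv k ≠ 0)
    (hto0 : Tendsto (fun k => ⨆ x : {x : EuclideanSpace ℝ (Fin d) | ∀ i, x i ∈ Set.Icc (0 : ℝ) 1},
        ‖A k (x : EuclideanSpace ℝ (Fin d)) + bv k‖) atTop (nhds 0)) :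
    ∃ ρ : ℝ, 0 < ρ ∧ ∃ γ : List ι, γ ≠ [] ∧ ∃ a : EuclideanSpace ℝ (Fin d),
      wordMap S γ a = a ∧ ∃ φ : ℕ → ℕ, StrictMono φ ∧ ∀ j : ℕ,
        ((⨆ x : Metric.ball a ρ, ‖A (φ j) (x : EuclideanSpace ℝ (Fin d)) + bv (φ j)‖) ≤
          3 * ⨅ x : Metric.ball a ρ, ‖A (φ j) (x : EuclideanSpace ℝ (Fin d)) + bv (φ j)‖) ∧
        ρ * ‖A (φ j)‖ ≤ ‖A (φ j) a + bv (φ j)‖ :=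
  affine_localisation_lemma_general S c hc hsim F hFcomp hFattr hFspan A bv hnz
end

section
/- Let t = 4·∑_{k=0}^∞ 5^{−2^k} and consider the IFS on [0,1] consisting of the three maps S'_1(x) = x/5, S'_2(x) = x/5 + t/5, S'_3(x) = x/5 + 4/5. This IFS does not satisfy the weak separation property: there exist finite words α_k, β_k ∈ I* with S_{α_k}^{-1}∘S_{β_k} ≠ I for all k and ‖S_{α_k}^{-1}∘S_{β_k} − I‖_∞ → 0 as k → ∞. -/
open Set Metric Filter Function MeasureTheory

open scoped Topology

/-!
All three maps have ratio `1/5`, so for words `α`, `β` of equal length `n` the map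
`S_α⁻¹ ∘ S_β` is the translation by `5ⁿ (S_β 0 - S_α 0)`. Take `β = 1 0^{2^k}`, so that
`S_β 0 = t/5`, and let `α` carry the letter `2` exactly at the positions `2^0, …, 2^k`, so that
`S_α 0 = (4/5) ∑_{i ≤ k} 5^{-2^i}` is a partial sum of `t/5`. The translation length is then
`4 · 5^{2^k} ∑_{i > k} 5^{-2^i}`, which is positive and, the series being lacunary, at most
`5 · 5^{-2^k}`.
-/

theorem not_satisfiesWSP_of_tendsto {ι X : Type*} [Nonempty X] [TopologicalSpace X]
    {S : ι → X → X} (A B : ℕ → List ι) (hA : ∀ k, A k ≠ []) (hB : ∀ k, B k ≠ [])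
    (hAB : ∀ k, A k ≠ B k)
    (hne : ∀ k, invFun (wordMap S (A k)) ∘ wordMap S (B k) ≠ id)
    (hlim : Tendsto (fun k => invFun (wordMap S (A k)) ∘ wordMap S (B k)) atTop (𝓝 id)) :
    ¬ SatisfiesWSP S :=
  not_not.2 <| mem_closure_of_tendsto hlim <| Eventually.of_forall fun k =>
    ⟨⟨A k, B k, hA k, hB k, hAB k, rfl⟩, hne k⟩

section CommonRatio

variable {ι : Type*} (c : ℝ) (d : ι → ℝ)

/-- The translation part `S_w 0` of `S_w` for the IFS `S i x = c * x + d i`. -/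
def wordOffset : List ι → ℝ
  | [] => 0
  | i :: w => c * wordOffset w + d i

variable {c d}

theorem wordMap_eq_mul_add {S : ι → ℝ → ℝ} (hS : ∀ i x, S i x = c * x + d i)
    (w : List ι) (x : ℝ) : wordMap S w x = c ^ w.length * x + wordOffset c d w := by
  induction w with
  | nil => simp [wordMap, wordOffset]
  | cons i w ih =>
    simp only [wordMap, comp_apply, ih, hS, wordOffset, List.length_cons, pow_succ]
    ring

theorem wordOffset_append (w₁ w₂ : List ι) :
    wordOffset c d (w₁ ++ w₂) = c ^ w₁.length * wordOffset c d w₂ + wordOffset c d w₁ := by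
  induction w₁ with
  | nil => simp [wordOffset]
  | cons i w ih =>
    simp only [List.cons_append, wordOffset, ih, List.length_cons, pow_succ]
    ring

theorem wordOffset_replicate {i : ι} (hi : d i = 0) (m : ℕ) :
    wordOffset c d (List.replicate m i) = 0 := by
  induction m with
  | zero => simp [wordOffset]
  | succ m ih => simp [List.replicate_succ, wordOffset, ih, hi]

theorem invFun_wordMap_comp_wordMap {S : ι → ℝ → ℝ} (hc : c ≠ 0)
    (hS : ∀ i x, S i x = c * x + d i) {α β : List ι} (hlen : α.length = β.length) :
    invFun (wordMap S α) ∘ wordMap S β =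
      (· + (wordOffset c d β - wordOffset c d α) / c ^ α.length) := by
  have hcn : c ^ α.length ≠ 0 := pow_ne_zero _ hc
  have hinj : Injective (wordMap S α) := fun x y hxy => by
    simpa [wordMap_eq_mul_add hS, hcn] using hxy
  funext x
  rw [comp_apply, ← leftInverse_invFun hinj (x + _)]
  congr 1
  rw [wordMap_eq_mul_add hS, wordMap_eq_mul_add hS, ← hlen]
  field_simp
  ring

end CommonRatio

section LacunarySeries

variable {q : ℝ}

theorem summable_pow_two_pow (hq₀ : 0 ≤ q) (hq₁ : q < 1) : Summable fun i : ℕ => q ^ 2 ^ i :=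
  (summable_geometric_of_lt_one hq₀ hq₁).of_nonneg_of_le (fun _ => pow_nonneg hq₀ _)
    fun _ => pow_le_pow_of_le_one hq₀ hq₁.le (Nat.lt_two_pow_self).le

theorem tsum_pow_two_pow_tail_pos (hq₀ : 0 < q) (hq₁ : q < 1) (k : ℕ) :
    0 < ∑' i : ℕ, q ^ 2 ^ (i + (k + 1)) :=
  ((summable_nat_add_iff (k + 1)).2 (summable_pow_two_pow hq₀.le hq₁)).tsum_pos
    (fun _ => by positivity) 0 (by positivity)

theorem two_pow_add_two_pow_add_le (k i : ℕ) : 2 ^ k + 2 ^ k + i ≤ 2 ^ (i + (k + 1)) := by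
  have hi : i + 1 ≤ 2 ^ i := Nat.lt_two_pow_self
  have hk : 1 ≤ 2 ^ k := Nat.one_le_two_pow
  rw [pow_add, pow_succ]
  nlinarith

theorem tendsto_tsum_pow_two_pow_tail_div (hq₀ : 0 < q) (hq₁ : q < 1) :
    Tendsto (fun k : ℕ => (∑' i : ℕ, q ^ 2 ^ (i + (k + 1))) / q ^ 2 ^ k) atTop (𝓝 0) := by
  have hgeom := summable_geometric_of_lt_one hq₀.le hq₁
  have hbound (k : ℕ) : (∑' i : ℕ, q ^ 2 ^ (i + (k + 1))) / q ^ 2 ^ k ≤ q ^ 2 ^ k / (1 - q) := by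
    have hterm (i : ℕ) : q ^ 2 ^ (i + (k + 1)) ≤ q ^ 2 ^ k * q ^ 2 ^ k * q ^ i := by
      rw [← pow_add, ← pow_add]
      exact pow_le_pow_of_le_one hq₀.le hq₁.le (two_pow_add_two_pow_add_le k i)
    have htail : ∑' i : ℕ, q ^ 2 ^ (i + (k + 1)) ≤ q ^ 2 ^ k * q ^ 2 ^ k * (1 - q)⁻¹ := by
      rw [← tsum_geometric_of_lt_one hq₀.le hq₁, ← tsum_mul_left]
      exact ((summable_nat_add_iff (k + 1)).2 (summable_pow_two_pow hq₀.le hq₁)).tsum_le_tsum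
        hterm (hgeom.mul_left _)
    rw [div_le_iff₀ (by positivity)]
    exact htail.trans_eq (by ring)
  have hlim : Tendsto (fun k : ℕ => q ^ 2 ^ k / (1 - q)) atTop (𝓝 0) := by
    simpa using ((tendsto_pow_atTop_nhds_zero_of_lt_one hq₀.le hq₁).comp
      (tendsto_pow_atTop_atTop_of_one_lt one_lt_two)).div_const (1 - q)
  exact squeeze_zero (fun k => div_nonneg (tsum_pow_two_pow_tail_pos hq₀ hq₁ k).le
    (by positivity)) hbound hlim

end LacunarySeries

/-- `0 2 2 0 2 0³ 2 ⋯`, of length `2^k + 1`: the letter `2` sits exactly at the positions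
`2^0, …, 2^k` (counting from `0`). -/
def bandtGrafWordA : ℕ → List (Fin 3)
  | 0 => [0, 2]
  | k + 1 => bandtGrafWordA k ++ (List.replicate (2 ^ k - 1) 0 ++ [2])

def bandtGrafWordB (k : ℕ) : List (Fin 3) := 1 :: List.replicate (2 ^ k) 0

theorem bandtGrafWordA_length (k : ℕ) : (bandtGrafWordA k).length = 2 ^ k + 1 := by
  induction k with
  | zero => rfl
  | succ k ih =>
    have : 1 ≤ 2 ^ k := Nat.one_le_two_pow
    simp only [bandtGrafWordA, List.length_append, List.length_replicate, ih,
      List.length_singleton, pow_succ]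
    omega

theorem bandtGrafWordA_head? (k : ℕ) : (bandtGrafWordA k).head? = some 0 := by
  induction k with
  | zero => rfl
  | succ k ih => simp [bandtGrafWordA, ih]

theorem bandtGrafWordA_ne_bandtGrafWordB (k : ℕ) : bandtGrafWordA k ≠ bandtGrafWordB k :=
  fun h => by simpa [h, bandtGrafWordB] using bandtGrafWordA_head? k

section BandtGraf

variable (t : ℝ)

theorem wordOffset_bandtGrafWordA (k : ℕ) :
    wordOffset 5⁻¹ ![0, t / 5, 4 / 5] (bandtGrafWordA k) =
      4 / 5 * ∑ i ∈ Finset.range (k + 1), (5⁻¹ : ℝ) ^ 2 ^ i := by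
  have hlast : wordOffset 5⁻¹ ![0, t / 5, 4 / 5] [2] = 4 / 5 := by simp [wordOffset]
  induction k with
  | zero =>
    rw [bandtGrafWordA, wordOffset, hlast]
    norm_num [wordOffset]
  | succ k ih =>
    have : 1 ≤ 2 ^ k := Nat.one_le_two_pow
    rw [bandtGrafWordA, wordOffset_append, wordOffset_append,
      wordOffset_replicate (d := ![0, t / 5, 4 / 5]) (i := 0) rfl,
      bandtGrafWordA_length, ih, Finset.sum_range_succ _ (k + 1), List.length_replicate, hlast,
      add_zero, ← mul_assoc, ← pow_add,
      show 2 ^ k + 1 + (2 ^ k - 1) = 2 ^ (k + 1) by rw [pow_succ]; omega]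
    ring

theorem wordOffset_bandtGrafWordB (k : ℕ) :
    wordOffset 5⁻¹ ![0, t / 5, 4 / 5] (bandtGrafWordB k) = t / 5 := by
  simp [bandtGrafWordB, wordOffset, wordOffset_replicate (d := ![0, t / 5, 4 / 5]) (i := 0) rfl]

variable {t}

theorem invFun_wordMap_bandtGrafWordA_comp (ht : t = 4 * ∑' k : ℕ, ((5 : ℝ)⁻¹) ^ (2 ^ k))
    {S : Fin 3 → ℝ → ℝ}
    (hS : S = ![fun x => x / 5, fun x => x / 5 + t / 5, fun x => x / 5 + 4 / 5]) (k : ℕ) :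
    invFun (wordMap S (bandtGrafWordA k)) ∘ wordMap S (bandtGrafWordB k) =
      (· + 4 * (∑' i : ℕ, (5⁻¹ : ℝ) ^ 2 ^ (i + (k + 1))) / 5⁻¹ ^ 2 ^ k) := by
  have hS' : ∀ i x, S i x = 5⁻¹ * x + ![0, t / 5, 4 / 5] i := by
    subst hS
    intro i x
    fin_cases i <;> simp <;> ring
  have hsplit :=
    (summable_pow_two_pow (q := 5⁻¹) (by norm_num) (by norm_num)).sum_add_tsum_nat_add (k + 1)
  have hlen : (bandtGrafWordA k).length = (bandtGrafWordB k).length := by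
    simp [bandtGrafWordA_length, bandtGrafWordB]
  rw [invFun_wordMap_comp_wordMap (by norm_num) hS' hlen,
    wordOffset_bandtGrafWordA, wordOffset_bandtGrafWordB, bandtGrafWordA_length, ht, ← hsplit]
  funext x
  rw [pow_succ]
  field_simp
  ring

end BandtGraf

/-- **A Bandt–Graf type example failing the WSP.**  Let `t = 4 ∑_{k≥0} 5^{-2^k}` and
consider the IFS on `[0,1]` given by `x/5`, `x/5 + t/5` and `x/5 + 4/5`.  This IFS does
not satisfy the weak separation property: there are nonempty words `α k ≠ β k` with
`S_{α k}⁻¹ ∘ S_{β k} ≠ I` for all `k` and `‖S_{α k}⁻¹ ∘ S_{β k} - I‖_∞ → 0`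
(supremum over `[0,1]`). -/
theorem bandt_graf_example_fails_wsp (t : ℝ)
    (ht : t = 4 * ∑' k : ℕ, ((5 : ℝ)⁻¹) ^ (2 ^ k))
    (S : Fin 3 → ℝ → ℝ)
    (hS : S = ![fun x => x / 5, fun x => x / 5 + t / 5, fun x => x / 5 + 4 / 5]) :
    ¬ SatisfiesWSP S ∧
    ∃ A B : ℕ → List (Fin 3),
      (∀ k, A k ≠ [] ∧ B k ≠ [] ∧ A k ≠ B k ∧
        Function.invFun (wordMap S (A k)) ∘ wordMap S (B k) ≠ id) ∧
      Tendsto (fun k => ⨆ x : Set.Icc (0 : ℝ) 1,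
          |Function.invFun (wordMap S (A k)) (wordMap S (B k) (x : ℝ)) - (x : ℝ)|)
        atTop (nhds 0) := by
  set ε : ℕ → ℝ := fun k => 4 * (∑' i : ℕ, (5⁻¹ : ℝ) ^ 2 ^ (i + (k + 1))) / 5⁻¹ ^ 2 ^ k
  have hg : ∀ k, invFun (wordMap S (bandtGrafWordA k)) ∘ wordMap S (bandtGrafWordB k) =
      (· + ε k) := invFun_wordMap_bandtGrafWordA_comp ht hS
  have hε (k : ℕ) : 0 < ε k := by
    have := tsum_pow_two_pow_tail_pos (q := 5⁻¹) (by norm_num) (by norm_num) k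
    positivity
  have hεlim : Tendsto ε atTop (𝓝 0) := by
    have := (tendsto_tsum_pow_two_pow_tail_div (q := 5⁻¹) (by norm_num) (by norm_num)).const_mul 4
    rw [mul_zero] at this
    exact this.congr fun k => (mul_div_assoc ..).symm
  have hne (k : ℕ) : invFun (wordMap S (bandtGrafWordA k)) ∘ wordMap S (bandtGrafWordB k) ≠ id :=
    fun h => (hε k).ne' (by simpa using congrFun ((hg k).symm.trans h) 0)
  have hA (k : ℕ) : bandtGrafWordA k ≠ [] :=
    List.ne_nil_of_length_pos (by simp [bandtGrafWordA_length])
  have hB (k : ℕ) : bandtGrafWordB k ≠ [] := List.cons_ne_nil _ _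
  refine ⟨not_satisfiesWSP_of_tendsto _ _ hA hB bandtGrafWordA_ne_bandtGrafWordB hne ?_,
    _, _, fun k => ⟨hA k, hB k, bandtGrafWordA_ne_bandtGrafWordB k, hne k⟩, ?_⟩
  · simp_rw [hg]
    exact tendsto_pi_nhds.2 fun x => by simpa using tendsto_const_nhds.add hεlim
  · have hg' (k : ℕ) (x : ℝ) :
        invFun (wordMap S (bandtGrafWordA k)) (wordMap S (bandtGrafWordB k) x) = x + ε k :=
      congrFun (hg k) x
    simpa [hg', abs_of_pos (hε _)] using hεlim
end

section
/- Let α, β ∈ (0,1) with (log β)/(log α) irrational, and for k ∈ ℕ let E_k = {α^m β^n : m ∈ ℕ, n ∈ ℤ, n ≥ −k} ∩ [0,1]. Then E_k converges to [0,1] in the Hausdorff metric as k → ∞; equivalently, sup_{y ∈ [0,1]} inf_{x ∈ E_k} |y − x| → 0 as k → ∞. -/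
open Set Metric Filter

/-!
Since `log β / log α` is irrational, some `θ = M log (1/α) - J log (1/β)` with `M, J ∈ ℕ` lies in
`(0, ε)`, so `r = α^M β^(-J) = exp (-θ)` lies in `(1 - ε, 1)`. The powers `r^0, …, r^N` then
form an `ε`-net of `[0, 1]` once `r^N < ε`, the gaps `r^i (1 - r)` being below `ε`, and they all
lie in `E k` as soon as `k ≥ N J`.
-/

theorem Irrational.int_mul_sub_int_mul_ne_zero {a b : ℝ} (hab : Irrational (b / a)) {P Q : ℤ}
    (hQ : Q ≠ 0) : (P : ℝ) * a - Q * b ≠ 0 := by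
  intro h
  have ha : a ≠ 0 := by rintro rfl; simp at hab
  refine hab.ne_rat (P / Q) ?_
  push_cast
  field_simp
  linarith

/-- The subgroup `ℤ b + ℤ a` is dense, so it has an element `g ∈ (0, δ)`. If the coefficient of `b`
in `g` is positive, pass to `a - ⌊a / g⌋ g ∈ [0, g)`, which is nonzero by irrationality. -/
theorem exists_nat_mul_sub_nat_mul_mem_Ioo {a b δ : ℝ} (ha : 0 < a) (hb : 0 < b)
    (hab : Irrational (b / a)) (hδ : 0 < δ) :
    ∃ M J : ℕ, (M : ℝ) * a - J * b ∈ Ioo 0 δ := by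
  have of_int_coeffs : ∀ P Q : ℤ, 0 ≤ Q → (P : ℝ) * a - Q * b ∈ Ioo 0 δ →
      ∃ M J : ℕ, (M : ℝ) * a - J * b ∈ Ioo 0 δ := by
    rintro P Q hQ ⟨hpos, hlt⟩
    have hP : 0 ≤ P := by
      have : (0 : ℝ) ≤ Q * b := mul_nonneg (by exact_mod_cast hQ) hb.le
      exact_mod_cast (pos_of_mul_pos_left (by linarith : (0 : ℝ) < P * a) ha.le).le
    lift P to ℕ using hP
    lift Q to ℕ using hQ
    exact ⟨P, Q, by exact_mod_cast hpos, by exact_mod_cast hlt⟩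
  obtain ⟨g, hg, hg0, hgδ⟩ := (dense_addSubgroupClosure_pair_iff.2 hab).exists_between hδ
  obtain ⟨p, q, hpq⟩ := AddSubgroup.mem_closure_pair.1 hg
  simp only [zsmul_eq_mul] at hpq
  rcases le_or_gt p 0 with hp | hp
  · exact of_int_coeffs q (-p) (by omega) ⟨by push_cast; linarith, by push_cast; linarith⟩
  · set i := ⌊a / g⌋
    have hi : 0 ≤ i := Int.floor_nonneg.2 (div_nonneg ha.le hg0.le)
    have hrem : ((1 - i * q : ℤ) : ℝ) * a - (i * p : ℤ) * b = a - i * g := by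
      rw [← hpq]; push_cast; ring
    have hne : a - i * g ≠ 0 := by
      rcases hi.eq_or_lt with h | h
      · simpa [← h] using ha.ne'
      · rw [← hrem]
        exact hab.int_mul_sub_int_mul_ne_zero (mul_pos h hp).ne'
    have hlow : 0 ≤ a - i * g := Int.sub_floor_div_mul_nonneg a hg0
    have hup : a - i * g < g := Int.sub_floor_div_mul_lt a hg0
    refine of_int_coeffs (1 - i * q) (i * p) (mul_nonneg hi hp.le) ?_
    rw [hrem]
    exact ⟨lt_of_le_of_ne hlow hne.symm, hup.trans hgδ⟩

theorem exists_pow_mul_zpow_mem_Ioo {α β ε : ℝ} (hα : α ∈ Ioo 0 1) (hβ : β ∈ Ioo 0 1)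
    (hirr : Irrational (Real.log β / Real.log α)) (hε : 0 < ε) :
    ∃ M J : ℕ, α ^ M * β ^ (-(J : ℤ)) ∈ Ioo (1 - ε) 1 := by
  have hlogα := Real.log_neg hα.1 hα.2
  have hlogβ := Real.log_neg hβ.1 hβ.2
  obtain ⟨M, J, hθ0, hθε⟩ := exists_nat_mul_sub_nat_mul_mem_Ioo (neg_pos.2 hlogα)
    (neg_pos.2 hlogβ) (by rwa [neg_div_neg_eq]) hε
  set θ := M * -Real.log α - J * -Real.log β
  have hexp : α ^ M * β ^ (-(J : ℤ)) = Real.exp (-θ) := by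
    rw [show -θ = M * Real.log α - J * Real.log β by ring, Real.exp_sub, Real.exp_nat_mul,
      Real.exp_nat_mul, Real.exp_log hα.1, Real.exp_log hβ.1, zpow_neg, zpow_natCast,
      div_eq_mul_inv]
  refine ⟨M, J, ?_⟩
  rw [hexp]
  refine ⟨?_, Real.exp_lt_one_iff.2 (neg_neg_of_pos hθ0)⟩
  linarith [Real.add_one_le_exp (-θ)]

theorem exists_le_abs_sub_pow_le_max {r y : ℝ} (hr₀ : 0 < r) (hr₁ : r < 1) (N : ℕ)
    (hy : y ∈ Icc 0 1) : ∃ i ≤ N, |y - r ^ i| ≤ max (1 - r) (r ^ N) := by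
  rcases le_or_gt y (r ^ N) with hyN | hyN
  · refine ⟨N, le_rfl, le_max_of_le_right ?_⟩
    rw [abs_of_nonpos (by linarith)]
    linarith [hy.1]
  obtain ⟨i, hi, hiy⟩ := exists_nat_pow_near_of_lt_one ((pow_pos hr₀ N).trans hyN) hy.2 hr₀ hr₁
  refine ⟨i, ((pow_lt_pow_iff_right_of_lt_one₀ hr₀ hr₁).1 (hyN.trans_le hiy)).le,
    le_max_of_le_left ?_⟩
  have hgap : r ^ i - r ^ (i + 1) ≤ 1 - r := by
    rw [pow_succ, ← mul_one_sub]
    exact mul_le_of_le_one_left (by linarith) (pow_le_one₀ hr₀.le hr₁.le)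
  rw [abs_of_nonpos (by linarith)]
  linarith

/-- **Density of `{α^m β^n}` in `[0,1]`.**  Let `α, β ∈ (0,1)` with `log β / log α`
irrational, and for `k ∈ ℕ` let `E k = {α^m β^n : m ∈ ℕ, n ∈ ℤ, n ≥ -k} ∩ [0,1]`.
Then `E k` converges to `[0,1]` in the Hausdorff metric as `k → ∞`; equivalently,
`sup_{y ∈ [0,1]} inf_{x ∈ E k} |y - x| → 0`. -/
theorem pretangent_sets_dense (α β : ℝ)
    (hα : α ∈ Set.Ioo (0 : ℝ) 1) (hβ : β ∈ Set.Ioo (0 : ℝ) 1)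
    (hirr : Irrational (Real.log β / Real.log α))
    (E : ℕ → Set ℝ)
    (hE : ∀ k, E k = {x : ℝ | ∃ (m : ℕ) (n : ℤ), -(k : ℤ) ≤ n ∧ x = α ^ m * β ^ n} ∩
      Set.Icc (0 : ℝ) 1) :
    Tendsto (fun k => ⨆ y : Set.Icc (0 : ℝ) 1, Metric.infDist (y : ℝ) (E k))
      atTop (nhds 0) := by
  rw [Metric.tendsto_atTop]
  intro ε hε
  obtain ⟨M, J, hr⟩ := exists_pow_mul_zpow_mem_Ioo hα hβ hirr (half_pos hε)
  set r := α ^ M * β ^ (-(J : ℤ))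
  have hr₀ : 0 < r := mul_pos (pow_pos hα.1 M) (zpow_pos hβ.1 _)
  obtain ⟨N, hN⟩ := exists_pow_lt_of_lt_one (half_pos hε) hr.2
  refine ⟨N * J, fun k hk => ?_⟩
  have hpow_mem : ∀ i ≤ N, r ^ i ∈ E k := by
    intro i hi
    rw [hE k]
    refine ⟨⟨M * i, -(J * i : ℕ), ?_, ?_⟩, (pow_pos hr₀ i).le, pow_le_one₀ hr₀.le hr.2.le⟩
    · have : J * i ≤ k := (Nat.mul_le_mul_left J hi).trans (by rwa [mul_comm])
      omega
    · rw [mul_pow, ← pow_mul, ← zpow_natCast (β ^ _) i, ← zpow_mul]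
      push_cast
      ring_nf
  have hclose : ∀ y : Icc (0 : ℝ) 1, infDist (y : ℝ) (E k) ≤ ε / 2 := by
    intro y
    obtain ⟨i, hi, hyi⟩ := exists_le_abs_sub_pow_le_max hr₀ hr.2 N y.2
    calc infDist (y : ℝ) (E k) ≤ |y - r ^ i| := infDist_le_dist_of_mem (hpow_mem i hi)
      _ ≤ ε / 2 := hyi.trans (max_le (by linarith [hr.1]) hN.le)
  rw [Real.dist_0_eq_abs, abs_of_nonneg (Real.iSup_nonneg fun _ => infDist_nonneg)]
  exact (Real.iSup_le hclose (half_pos hε).le).trans_lt (half_lt_self hε)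
end
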